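/- With the lattice-sum notation: if L_{d+1} = N_+ + N_− − N_{d−1} ≥ 0 and both n_+ < 0 and n_− < 0, then P_N(n) = Π_{a ∈ I} [e_a·(N + n − n𝒜), e_a·n]⁺_q = 0. -/
import Mathlib


noncomputable section
open LaurentPolynomial

def gaussRec (v : LaurentPolynomial ℤ) : ℕ → ℕ → LaurentPolynomial ℤ
  | 0, 0 => 1
  | 0, _ + 1 => 0
  | _ + 1, 0 => 1
  | n + 1, m + 1 => gaussRec v n (m + 1) * v ^ (m + 1) + gaussRec v n m

/-- `[n m]_v` for integer indices: the Gaussian binomial in the variable `v`,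
zero unless `0 ≤ m ≤ n`. -/
def gaussZ (v : LaurentPolynomial ℤ) (n m : ℤ) : LaurentPolynomial ℤ :=
  if 0 ≤ m ∧ m ≤ n then gaussRec v n.toNat m.toNat else 0

/-- The Gaussian binomial coefficient `[n m]_q` as a Laurent polynomial in `q = T 1`. -/
def qbin (n m : ℤ) : LaurentPolynomial ℤ := gaussZ (T 1) n m

/-- The extended q-binomial coefficient `[n m]⁺_q ∈ ℤ[q,q⁻¹]`. -/
def qbinPlus (n m : ℤ) : LaurentPolynomial ℤ :=
  if 0 ≤ n then qbin n m
  else (-1) ^ (n - m).natAbs * T (-(((n - m) ^ 2 + (n - m)) / 2)) *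
    gaussZ (T (-1)) (-m - 1) (-n - 1)


/-- The symmetric `(d+2) × (d+2)` matrix `𝒜`, with indices `0 ↦ +`, `1 ↦ −`,
`i+2 ↦ i` for `0 ≤ i ≤ d-1`. -/
def Amat (p d : ℕ) : Matrix (Fin (d + 2)) (Fin (d + 2)) ℤ := fun i j =>
  if (i : ℕ) = 0 ∧ (j : ℕ) = 0 then (p : ℤ)
  else if (i : ℕ) = 1 ∧ (j : ℕ) = 1 then (p : ℤ)
  else if ((i : ℕ) = 0 ∧ (j : ℕ) = 1) ∨ ((i : ℕ) = 1 ∧ (j : ℕ) = 0) then -(p : ℤ) + d + 1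
  else if (i : ℕ) ≤ 1 then (j : ℤ) - 1
  else if (j : ℕ) ≤ 1 then (i : ℤ) - 1
  else 2 * min ((i : ℤ) - 1) ((j : ℤ) - 1)

/-- The tridiagonal matrix `T_m` with diagonal `(2, ..., 2, 1)` and `-1` on the
off-diagonals, so that `(T_m⁻¹)_{ij} = min(i,j)`. -/
def Tmat (m : ℕ) : Matrix (Fin m) (Fin m) ℤ := fun i j =>
  if i = j then (if (i : ℕ) = m - 1 then 1 else 2)
  else if (i : ℕ) + 1 = (j : ℕ) ∨ (j : ℕ) + 1 = (i : ℕ) then -1 else 0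

/-- `N' = (N_0, ..., N_{d-1}, N_+ + N_-)`. -/
def Nprime (d : ℕ) (N : Fin (d + 2) → ℤ) : Fin (d + 1) → ℤ := fun i =>
  if h : (i : ℕ) < d then N ⟨(i : ℕ) + 2, by omega⟩ else N 0 + N 1

/-- `L = N' T_{d+1}` (as a row vector times the matrix); `Lvec d N j` is `L_{j+1}`. -/
def Lvec (d : ℕ) (N : Fin (d + 2) → ℤ) : Fin (d + 1) → ℤ := fun j =>
  ∑ i, Nprime d N i * Tmat (d + 1) i j

/-- `(n𝒜)_a = Σ_j n_j 𝒜_{ja}`. -/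
def rowA (p d : ℕ) (n : Fin (d + 2) → ℤ) (a : Fin (d + 2)) : ℤ :=
  ∑ j, n j * Amat p d j a

/-- `P_N(n) = Π_{a ∈ I} [e_a·(N + n − n𝒜), e_a·n]⁺_q`. -/
def Pfun (p d : ℕ) (N n : Fin (d + 2) → ℤ) : LaurentPolynomial ℤ :=
  ∏ a, qbinPlus (N a + n a - rowA p d n a) (n a)


lemma qbinPlus_neg_m (nn m : ℤ) (h1 : 0 ≤ nn) (h2 : m < 0) : qbinPlus nn m = 0 := by
  rw [qbinPlus, if_pos h1, qbin, gaussZ, if_neg]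
  rintro ⟨h, -⟩; omega

lemma qbinPlus_lt (nn m : ℤ) (h : nn < m) : qbinPlus nn m = 0 := by
  rw [qbinPlus]
  split
  · rw [qbin, gaussZ, if_neg]; rintro ⟨-, h'⟩; omega
  · rw [gaussZ, if_neg, mul_zero]; rintro ⟨-, h'⟩; omega

lemma Amat_term (p d : ℕ) (hd1 : 1 ≤ d) (j : Fin (d + 2)) :
    Amat p d j 0 + Amat p d j 1 - Amat p d j ⟨d + 1, by omega⟩ =
      if (j : ℕ) ≤ 1 then 1 else 0 := by
  have h0 : ((0 : Fin (d + 2)) : ℕ) = 0 := rfl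
  have h1 : ((1 : Fin (d + 2)) : ℕ) = 1 := rfl
  have hl : ((⟨d + 1, by omega⟩ : Fin (d + 2)) : ℕ) = d + 1 := rfl
  by_cases hj0 : (j : ℕ) = 0
  · simp only [Amat, h0, h1, hl, hj0]
    norm_num
    omega
  · by_cases hj1 : (j : ℕ) = 1
    · simp only [Amat, h0, h1, hl, hj1]
      norm_num
      omega
    · have hj2 : 2 ≤ (j : ℕ) := by omega
      have hjd : (j : ℕ) ≤ d + 1 := by omega
      simp only [Amat, h0, h1, hl, hj0, hj1]
      have hle : ¬ (j : ℕ) ≤ 1 := by omega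
      have hd0 : ¬ d = 0 := by omega
      norm_num
      simp only [hle, hd0, if_false]
      have hmin : min ((j : ℤ) - 1) ((d : ℤ)) = (j : ℤ) - 1 :=
        min_eq_left (by omega)
      rw [hmin]; ring

lemma rowA_key (p d : ℕ) (hd1 : 1 ≤ d) (n : Fin (d + 2) → ℤ) :
    rowA p d n 0 + rowA p d n 1 - rowA p d n ⟨d + 1, by omega⟩ = n 0 + n 1 := by
  have h : rowA p d n 0 + rowA p d n 1 - rowA p d n ⟨d + 1, by omega⟩ =
      ∑ j : Fin (d + 2), n j * (if (j : ℕ) ≤ 1 then 1 else 0) := by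
    unfold rowA
    rw [← Finset.sum_add_distrib, ← Finset.sum_sub_distrib]
    exact Finset.sum_congr rfl fun j _ => by rw [← Amat_term p d hd1 j]; ring
  rw [h, Fin.sum_univ_succ, Fin.sum_univ_succ]
  have h2 : ∀ i : Fin d, n (Fin.succ (Fin.succ i)) *
      (if ((Fin.succ (Fin.succ i) : Fin (d + 2)) : ℕ) ≤ 1 then (1 : ℤ) else 0) = 0 := by
    intro i
    have : ¬ ((Fin.succ (Fin.succ i) : Fin (d + 2)) : ℕ) ≤ 1 := by
      simp [Fin.val_succ]
    rw [if_neg this, mul_zero]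
  rw [Finset.sum_congr rfl fun i _ => h2 i]
  simp

/-- if `L_{d+1} = N_+ + N_- - N_{d-1} ≥ 0` and `n_+ < 0`, `n_- < 0`,
then `P_N(n) = 0`. -/
theorem Pfun_vanish_both_neg (p d : ℕ) (hp : 2 ≤ p) (hd : d < 2 * p - 2) (hd1 : 1 ≤ d)
    (N n : Fin (d + 2) → ℤ)
    (hL : 0 ≤ N 0 + N 1 - N ⟨d + 1, by omega⟩)
    (hnp : n 0 < 0) (hnm : n 1 < 0) :
    Pfun p d N n = 0 := by
  by_cases h0 : 0 ≤ N 0 + n 0 - rowA p d n 0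
  · exact Finset.prod_eq_zero (Finset.mem_univ (0 : Fin (d + 2)))
      (qbinPlus_neg_m _ _ h0 hnp)
  · by_cases h1 : 0 ≤ N 1 + n 1 - rowA p d n 1
    · exact Finset.prod_eq_zero (Finset.mem_univ (1 : Fin (d + 2)))
        (qbinPlus_neg_m _ _ h1 hnm)
    · set a : Fin (d + 2) := ⟨d + 1, by omega⟩
      apply Finset.prod_eq_zero (Finset.mem_univ a)
      apply qbinPlus_lt
      have hkey : rowA p d n 0 + rowA p d n 1 - rowA p d n a = n 0 + n 1 :=
        rowA_key p d hd1 n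
      omega


end
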